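/- Let A, Z, W, X be discrete with all relevant conditional probabilities positive, and let q_a satisfy Σ_z q_a(z,a',x)·p(z | w, a', x) = p(w|a,x)/p(w|a',x) for all w,a',x. Then for any h: Σ_w h(w,a',x)·p(w|a,x) = (1/p(a'|x))·Σ_{w,z} h(w,a',x)·q_a(z,a',x)·p(z,w,a' | x), i.e., E[h(W,a',X) | A=a, X=x] = E[ I(A=a')/p(A=a'|X)·h(W,A,X)·q_a(Z,A,X) | X=x ]. -/
import Mathlib


open Finset
open scoped Classical

noncomputable section

/-- Probability of an event under weights `mu`. -/
def pr {O : Type} [Fintype O] (mu : O -> Real) (s : O -> Prop) : Real :=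
  Finset.univ.sum (fun w => if s w then mu w else 0)

/-- Conditional probability `P(s | t)`. -/
def cpr {O : Type} [Fintype O] (mu : O -> Real) (s t : O -> Prop) : Real :=
  pr mu (fun w => s w /\ t w) / pr mu t

/-- Expectation of `f`. -/
def expec {O : Type} [Fintype O] (mu : O -> Real) (f : O -> Real) : Real :=
  Finset.univ.sum (fun w => f w * mu w)

/-- Conditional expectation `E[f | t]`. -/
def cexp {O : Type} [Fintype O] (mu : O -> Real) (f : O -> Real) (t : O -> Prop) : Real :=
  (Finset.univ.sum (fun w => if t w then f w * mu w else 0)) / pr mu t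


lemma pr_congr {O : Type} [Fintype O] (mu : O -> Real) (s t : O -> Prop)
    (hst : ∀ o, s o ↔ t o) : pr mu s = pr mu t := by
  unfold pr; exact Finset.sum_congr rfl (fun o _ => by rw [hst o])

lemma fiber_sum {O T : Type} [Fintype O] [Fintype T] [DecidableEq T]
    (F : O → T) (g : T → O → Real) :
    Finset.univ.sum (fun o => g (F o) o) =
    Finset.univ.sum (fun t => Finset.univ.sum (fun o => if F o = t then g t o else 0)) := by
  rw [Finset.sum_comm]
  apply Finset.sum_congr rfl
  intro o _
  simp

lemma pull_const {O : Type} [Fintype O] (mu : O -> Real) (c : Real) (s : O -> Prop)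
    [DecidablePred s] :
    Finset.univ.sum (fun o => if s o then c * mu o else 0) = c * pr mu s := by
  unfold pr; rw [Finset.mul_sum]
  apply Finset.sum_congr rfl
  intro o _
  by_cases hs : s o <;> simp [hs]

lemma cexp_eq {O : Type} [Fintype O] (mu : O -> Real) (f : O -> Real) (t : O -> Prop)
    [DecidablePred t] :
    cexp mu f t = (Finset.univ.sum (fun o => if t o then f o * mu o else 0)) / pr mu t := by
  unfold cexp
  congr 1
  apply Finset.sum_congr rfl
  intro o _
  by_cases ht : t o <;> simp [ht]

theorem stmt15
    {O TA TM TZ TW TX : Type}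
    [Fintype O] [Fintype TA] [Fintype TM] [Fintype TZ] [Fintype TW] [Fintype TX]
    [DecidableEq TA] [DecidableEq TM] [DecidableEq TZ] [DecidableEq TW] [DecidableEq TX]
    (mu : O -> Real) (hmu0 : forall o : O, 0 <= mu o)
    (hmu1 : Finset.univ.sum mu = 1)
    (A : O -> TA) (Y : O -> Real) (M : O -> TM) (Z : O -> TZ) (W : O -> TW) (X : O -> TX)
    (a a' : TA) (q : TZ -> TA -> TX -> Real) (h : TW -> TA -> TX -> Real)
    (hq : forall (v : TW) (t : TA) (x : TX),
      Finset.univ.sum (fun z : TZ =>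
        q z t x * cpr mu (fun o => Z o = z) (fun o => W o = v /\ A o = t /\ X o = x)) =
      cpr mu (fun o => W o = v) (fun o => A o = a /\ X o = x) /
        cpr mu (fun o => W o = v) (fun o => A o = t /\ X o = x))
    (hpa : forall x : TX, 0 < pr mu (fun o => X o = x) ->
      0 < pr mu (fun o => A o = a /\ X o = x))
    (hpa' : forall x : TX, 0 < pr mu (fun o => X o = x) ->
      0 < pr mu (fun o => A o = a' /\ X o = x))
    (hpw : forall (v : TW) (x : TX), 0 < pr mu (fun o => X o = x) ->
      0 < pr mu (fun o => W o = v /\ A o = a' /\ X o = x)) :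
    forall x : TX, 0 < pr mu (fun o => X o = x) ->
      (Finset.univ.sum (fun v : TW =>
        h v a' x * cpr mu (fun o => W o = v) (fun o => A o = a /\ X o = x)) =
       (1 / cpr mu (fun o => A o = a') (fun o => X o = x)) *
        Finset.univ.sum (fun v : TW => Finset.univ.sum (fun z : TZ =>
          h v a' x * q z a' x *
            cpr mu (fun o => Z o = z /\ W o = v /\ A o = a') (fun o => X o = x)))) /\
      (cexp mu (fun o => h (W o) a' (X o)) (fun o => A o = a /\ X o = x) =
       cexp mu (fun o =>
        (if A o = a' then (1 : Real) else 0) /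
            cpr mu (fun o' => A o' = a') (fun o' => X o' = X o) *
          h (W o) (A o) (X o) * q (Z o) (A o) (X o)) (fun o => X o = x)) := by
  intro x hx
  have hPa := hpa x hx
  have hPa' := hpa' x hx
  -- abbreviations
  set Px := pr mu (fun o => X o = x) with hPx_def
  -- key consequence of hq
  have hkey : ∀ v : TW,
      Finset.univ.sum (fun z => q z a' x *
        pr mu (fun o => Z o = z ∧ W o = v ∧ A o = a' ∧ X o = x)) =
      pr mu (fun o => A o = a' ∧ X o = x) *
        pr mu (fun o => W o = v ∧ A o = a ∧ X o = x) /
        pr mu (fun o => A o = a ∧ X o = x) := by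
    intro v
    have hPw := hpw v x hx
    have h1 := hq v a' x
    unfold cpr at h1
    simp only [← mul_div_assoc] at h1
    rw [← Finset.sum_div] at h1
    have h2 := (div_eq_iff hPw.ne').mp h1
    rw [h2]
    field_simp
  -- the core sum S
  set S := Finset.univ.sum (fun v : TW => Finset.univ.sum (fun z : TZ =>
      h v a' x * q z a' x *
        pr mu (fun o => Z o = z ∧ W o = v ∧ A o = a' ∧ X o = x))) with hS_def
  set T := Finset.univ.sum (fun v : TW =>
      h v a' x * pr mu (fun o => W o = v ∧ A o = a ∧ X o = x)) with hT_def
  have hST : S = pr mu (fun o => A o = a' ∧ X o = x) * T /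
      pr mu (fun o => A o = a ∧ X o = x) := by
    rw [hS_def, hT_def, Finset.mul_sum, Finset.sum_div]
    apply Finset.sum_congr rfl
    intro v _
    have : (fun z => h v a' x * q z a' x *
        pr mu (fun o => Z o = z ∧ W o = v ∧ A o = a' ∧ X o = x)) =
        fun z => h v a' x * (q z a' x *
        pr mu (fun o => Z o = z ∧ W o = v ∧ A o = a' ∧ X o = x)) := by
      funext z; ring
    rw [this, ← Finset.mul_sum, hkey v]
    ring
  -- bullet 1
  have e2 : ∀ (v : TW) (z : TZ),
      pr mu (fun o => (Z o = z ∧ W o = v ∧ A o = a') ∧ X o = x) =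
      pr mu (fun o => Z o = z ∧ W o = v ∧ A o = a' ∧ X o = x) :=
    fun v z => pr_congr mu _ _ (fun o => by tauto)
  have bullet1 : Finset.univ.sum (fun v : TW =>
        h v a' x * cpr mu (fun o => W o = v) (fun o => A o = a /\ X o = x)) =
      (1 / cpr mu (fun o => A o = a') (fun o => X o = x)) *
        Finset.univ.sum (fun v : TW => Finset.univ.sum (fun z : TZ =>
          h v a' x * q z a' x *
            cpr mu (fun o => Z o = z /\ W o = v /\ A o = a') (fun o => X o = x))) := by
    unfold cpr
    simp only [e2, div_div_eq_mul_div, ← mul_div_assoc]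
    rw [← Finset.sum_div]
    have hR : Finset.univ.sum (fun v : TW => Finset.univ.sum (fun z : TZ =>
        h v a' x * q z a' x *
          pr mu (fun o => Z o = z ∧ W o = v ∧ A o = a' ∧ X o = x) / Px)) = S / Px := by
      rw [hS_def, Finset.sum_div]
      apply Finset.sum_congr rfl
      intro v _
      rw [Finset.sum_div]
    rw [hR, hST]
    field_simp
    ring
  refine ⟨bullet1, ?_⟩
  have numL : Finset.univ.sum (fun o : O =>
      if A o = a ∧ X o = x then h (W o) a' (X o) * mu o else 0) = T := by
    have step1 : ∀ o : O, (if A o = a ∧ X o = x then h (W o) a' (X o) * mu o else 0) =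
        (if A o = a ∧ X o = x then h (W o) a' x * mu o else 0) := by
      intro o; by_cases hc : A o = a ∧ X o = x
      · rw [if_pos hc, if_pos hc, hc.2]
      · rw [if_neg hc, if_neg hc]
    simp only [step1]
    have fs := fiber_sum (T := TW) W
      (fun v o => if A o = a ∧ X o = x then h v a' x * mu o else 0)
    rw [fs, hT_def]
    apply Finset.sum_congr rfl
    intro v _
    have step2 : ∀ o : O, (if W o = v then
        (if A o = a ∧ X o = x then h v a' x * mu o else 0) else 0) =
        (if W o = v ∧ A o = a ∧ X o = x then h v a' x * mu o else 0) := by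
      intro o; by_cases h1 : W o = v <;> by_cases h2 : A o = a ∧ X o = x <;>
        simp [h1, h2]
    simp only [step2]
    exact pull_const mu (h v a' x) _
  have numR : Finset.univ.sum (fun o : O =>
      if X o = x then ((if A o = a' then (1 : Real) else 0) /
          cpr mu (fun o' => A o' = a') (fun o' => X o' = X o) *
        h (W o) (A o) (X o) * q (Z o) (A o) (X o)) * mu o else 0) =
      Px / pr mu (fun o => A o = a' ∧ X o = x) * S := by
    have step1 : ∀ o : O, (if X o = x then ((if A o = a' then (1 : Real) else 0) /
          cpr mu (fun o' => A o' = a') (fun o' => X o' = X o) *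
        h (W o) (A o) (X o) * q (Z o) (A o) (X o)) * mu o else 0) =
        (if A o = a' ∧ X o = x then
          Px / pr mu (fun o => A o = a' ∧ X o = x) *
            (h (W o) a' x * q (Z o) a' x) * mu o else 0) := by
      intro o
      by_cases h1 : X o = x
      · by_cases h2 : A o = a'
        · have hc : A o = a' ∧ X o = x := ⟨h2, h1⟩
          rw [if_pos h1, if_pos hc, if_pos h2, h1, h2]
          unfold cpr
          rw [← hPx_def, one_div_div]
          ring
        · rw [if_pos h1, if_neg h2,
            if_neg (fun hc : A o = a' ∧ X o = x => h2 hc.1)]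
          simp
      · rw [if_neg h1, if_neg (fun hc => h1 hc.2)]
    simp only [step1]
    have fs := fiber_sum (T := TW × TZ) (fun o => (W o, Z o))
      (fun p o => if A o = a' ∧ X o = x then
        Px / pr mu (fun o => A o = a' ∧ X o = x) *
          (h p.1 a' x * q p.2 a' x) * mu o else 0)
    rw [fs, Fintype.sum_prod_type, hS_def, Finset.mul_sum]
    apply Finset.sum_congr rfl
    intro v _
    rw [Finset.mul_sum]
    apply Finset.sum_congr rfl
    intro z _
    have step2 : ∀ o : O, (if (W o, Z o) = (v, z) then
        (if A o = a' ∧ X o = x then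
          Px / pr mu (fun o => A o = a' ∧ X o = x) *
            (h v a' x * q z a' x) * mu o else 0) else 0) =
        (if Z o = z ∧ W o = v ∧ A o = a' ∧ X o = x then
          (Px / pr mu (fun o => A o = a' ∧ X o = x) *
            (h v a' x * q z a' x)) * mu o else 0) := by
      intro o
      by_cases h1 : W o = v <;> by_cases h2 : Z o = z <;>
        by_cases h3 : A o = a' ∧ X o = x <;>
        simp [h1, h2, h3, Prod.ext_iff]
    simp only [step2]
    exact (pull_const mu _ _).trans (by ring)
  simp only [cexp_eq]
  rw [numL, numR, ← hPx_def, hST]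
  field_simp
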